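/- arXiv:1208.2311 — 6 statements merged into one kernel-verified Lean document; each statement's English description precedes it below -/
import Mathlib

section
/- For all m₁, m₂ ∈ ℝ, v₁, v₂ > 0 and λ ∈ [0,1], the tilted Gaussian integral satisfies −log ∫_ℝ φ_{m₁,v₁}(x)^λ · φ_{m₂,v₂}(x)^{1−λ} dx = (1/2) log( (λ v₂ + (1−λ) v₁) / (v₁^{1−λ} v₂^{λ}) ) + λ(1−λ)(m₁−m₂)² / (2(λ v₂ + (1−λ) v₁)). -/
open MeasureTheory Real Set

/-- The Gaussian density with mean `m` and variance `v`. -/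
noncomputable def gpdf (m v x : ℝ) : ℝ :=
  (Real.sqrt (2 * Real.pi * v))⁻¹ * Real.exp (-(x - m) ^ 2 / (2 * v))

/-- Closed form for −log of the tilted Gaussian integral with means m₁, m₂ and
variances v₁, v₂. -/
theorem stmt3 (m₁ m₂ v₁ v₂ lam : ℝ) (hv₁ : 0 < v₁) (hv₂ : 0 < v₂)
    (hlam : lam ∈ Set.Icc (0 : ℝ) 1) :
    -Real.log (∫ x : ℝ, gpdf m₁ v₁ x ^ lam * gpdf m₂ v₂ x ^ (1 - lam))
      = (1 / 2) * Real.log ((lam * v₂ + (1 - lam) * v₁) / (v₁ ^ (1 - lam) * v₂ ^ lam))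
        + lam * (1 - lam) * (m₁ - m₂) ^ 2 / (2 * (lam * v₂ + (1 - lam) * v₁)) := by
  obtain ⟨hl0, hl1⟩ := hlam
  set S : ℝ := lam * v₂ + (1 - lam) * v₁ with hSdef
  have hS0 : 0 < S := by
    rcases lt_or_eq_of_le hl0 with h | h
    · have : 0 < lam * v₂ := by positivity
      nlinarith
    · simp [hSdef, ← h, hv₁]
  have hpi : (0:ℝ) < π := Real.pi_pos
  set b : ℝ := S / (2 * v₁ * v₂) with hbdef
  have hb0 : 0 < b := by positivity
  set μ : ℝ := (lam * m₁ * v₂ + (1 - lam) * m₂ * v₁) / S with hmudef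
  set K : ℝ := lam * (1 - lam) * (m₁ - m₂) ^ 2 / (2 * S) with hKdef
  set C : ℝ := (Real.sqrt (2 * π * v₁))⁻¹ ^ lam * (Real.sqrt (2 * π * v₂))⁻¹ ^ (1 - lam)
      * Real.exp (-K) with hCdef
  have hpt : ∀ x : ℝ, gpdf m₁ v₁ x ^ lam * gpdf m₂ v₂ x ^ (1 - lam)
      = C * Real.exp (-b * (x - μ) ^ 2) := by
    intro x
    have h1 : (0:ℝ) < Real.sqrt (2 * π * v₁) := Real.sqrt_pos.2 (by positivity)
    have h2 : (0:ℝ) < Real.sqrt (2 * π * v₂) := Real.sqrt_pos.2 (by positivity)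
    unfold gpdf
    rw [Real.mul_rpow (by positivity) (Real.exp_nonneg _),
        Real.mul_rpow (by positivity) (Real.exp_nonneg _),
        ← Real.exp_mul, ← Real.exp_mul, hCdef]
    have he : Real.exp (-(x - m₁) ^ 2 / (2 * v₁) * lam + -(x - m₂) ^ 2 / (2 * v₂) * (1 - lam))
        = Real.exp (-K) * Real.exp (-b * (x - μ) ^ 2) := by
      rw [← Real.exp_add]
      congr 1
      rw [hKdef, hbdef, hmudef]
      field_simp
      ring
    rw [mul_mul_mul_comm, ← Real.exp_add, he]
    ring
  rw [funext hpt, MeasureTheory.integral_const_mul, integral_sub_right_eq_self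
      (fun x : ℝ => Real.exp (-b * x ^ 2)) μ, integral_gaussian]
  have h1 : (0:ℝ) < Real.sqrt (2 * π * v₁) := Real.sqrt_pos.2 (by positivity)
  have h2 : (0:ℝ) < Real.sqrt (2 * π * v₂) := Real.sqrt_pos.2 (by positivity)
  have hsq : (0:ℝ) < Real.sqrt (π / b) := Real.sqrt_pos.2 (by positivity)
  rw [hCdef, Real.log_mul (by positivity) hsq.ne', Real.log_mul (by positivity) (Real.exp_ne_zero _),
      Real.log_mul (by positivity) (by positivity),
      Real.log_rpow (by positivity), Real.log_rpow (by positivity),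
      Real.log_exp, Real.log_inv, Real.log_inv,
      Real.log_sqrt (by positivity), Real.log_sqrt (by positivity),
      Real.log_sqrt (by positivity)]
  have e1 : Real.log (2 * π * v₁) = Real.log (2*π) + Real.log v₁ :=
    Real.log_mul (by positivity) hv₁.ne'
  have e2 : Real.log (2 * π * v₂) = Real.log (2*π) + Real.log v₂ :=
    Real.log_mul (by positivity) hv₂.ne'
  have e3 : Real.log (π / b) = Real.log (2*π) + Real.log v₁ + Real.log v₂ - Real.log S := by
    have : π / b = 2 * π * v₁ * v₂ / S := by
      rw [hbdef]; field_simp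
    rw [this, Real.log_div (by positivity) hS0.ne', Real.log_mul (by positivity) hv₂.ne', e1]
  have e4 : Real.log (S / (v₁ ^ (1 - lam) * v₂ ^ lam))
      = Real.log S - ((1 - lam) * Real.log v₁ + lam * Real.log v₂) := by
    rw [Real.log_div hS0.ne' (by positivity), Real.log_mul (by positivity) (by positivity),
        Real.log_rpow hv₁, Real.log_rpow hv₂]
  rw [e1, e2, e3, e4, hKdef]
  ring
end

section
/- Let σ > 0, let A, B ∈ ℝ with A ≠ B, and let (α₁, α₂) ∈ ℝ² with (α₁, α₂) ≠ (0,0). Define C(m₁, m₂, v) = −inf_{λ∈[0,1]} log ∫_ℝ φ_{m₁,v}(x)^λ φ_{m₂,v}(x)^{1−λ} dx. Then C(α₁A + α₂B, α₁B + α₂A, (α₁² + α₂²)σ²) ≤ 2 · C(A, B, σ²), i.e., (α₁−α₂)²(A−B)² / (8(α₁²+α₂²)σ²) ≤ 2(A−B)²/(8σ²), with equality if and only if α₂ = −α₁. In particular, the mixed observation α₁X₁ + α₂X₂ with α₂ = −α₁ doubles the Chernoff information compared with a separate observation of X₁ or X₂. -/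
open MeasureTheory Real Set

/-- The Chernoff information between N(m₁,v) and N(m₂,v). -/
noncomputable def chernoff (m₁ m₂ v : ℝ) : ℝ :=
  -(⨅ lam : Set.Icc (0 : ℝ) 1,
      Real.log (∫ x : ℝ, gpdf m₁ v x ^ (lam : ℝ) * gpdf m₂ v x ^ (1 - (lam : ℝ))))

/-!
The geometric mixture `φ_{m₁,v}^t φ_{m₂,v}^(1-t)` is `exp (-t (1-t) (m₁-m₂)² / (2v))` times the
Gaussian density with mean `t m₁ + (1-t) m₂`, so the Chernoff information between Gaussians of
equal variance is `(m₁-m₂)² / (8v)`, the infimum being attained at `t = 1/2`. The mixed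
observation has mean gap `(α₁-α₂)(A-B)` and variance `(α₁²+α₂²)σ²`, and the comparison with twice
the separate information comes down to `2(α₁²+α₂²) - (α₁-α₂)² = (α₁+α₂)²`.
-/

lemma gpdf_pos (m : ℝ) {v : ℝ} (hv : 0 < v) (x : ℝ) : 0 < gpdf m v x := by
  unfold gpdf
  have : 0 < √(2 * π * v) := by positivity
  positivity

lemma log_gpdf (m : ℝ) {v : ℝ} (hv : 0 < v) (x : ℝ) :
    log (gpdf m v x) = log (√(2 * π * v))⁻¹ - (x - m) ^ 2 / (2 * v) := by
  have : 0 < √(2 * π * v) := by positivity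
  rw [gpdf, log_mul (by positivity) (exp_pos _).ne', log_exp]
  ring

lemma integral_gpdf (m : ℝ) {v : ℝ} (hv : 0 < v) : ∫ x, gpdf m v x = 1 :=
  ProbabilityTheory.integral_gaussianPDFReal_eq_one (v := ⟨v, hv.le⟩) m
    fun h => hv.ne' (congrArg NNReal.toReal h)

lemma gpdf_rpow_mul_gpdf_rpow (m₁ m₂ : ℝ) {v : ℝ} (hv : 0 < v) (t x : ℝ) :
    gpdf m₁ v x ^ t * gpdf m₂ v x ^ (1 - t)
      = exp (-(t * (1 - t) * ((m₁ - m₂) ^ 2 / (2 * v)))) * gpdf (t * m₁ + (1 - t) * m₂) v x := by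
  rw [rpow_def_of_pos (gpdf_pos m₁ hv x), rpow_def_of_pos (gpdf_pos m₂ hv x), ← exp_add,
    ← exp_log (gpdf_pos (t * m₁ + (1 - t) * m₂) hv x), ← exp_add,
    log_gpdf _ hv, log_gpdf _ hv, log_gpdf _ hv]
  congr 1
  field_simp
  ring

lemma integral_gpdf_rpow_mul_gpdf_rpow (m₁ m₂ : ℝ) {v : ℝ} (hv : 0 < v) (t : ℝ) :
    ∫ x, gpdf m₁ v x ^ t * gpdf m₂ v x ^ (1 - t)
      = exp (-(t * (1 - t) * ((m₁ - m₂) ^ 2 / (2 * v)))) := by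
  simp_rw [gpdf_rpow_mul_gpdf_rpow m₁ m₂ hv, integral_const_mul, integral_gpdf _ hv, mul_one]

lemma iInf_Icc_neg_mul_one_sub_mul {c : ℝ} (hc : 0 ≤ c) :
    ⨅ t : Icc (0 : ℝ) 1, -((t : ℝ) * (1 - t) * c) = -(c / 4) := by
  refine IsLeast.csInf_eq ⟨⟨⟨1 / 2, by norm_num, by norm_num⟩, by ring⟩, ?_⟩
  rintro _ ⟨t, rfl⟩
  nlinarith [mul_nonneg (sq_nonneg ((t : ℝ) - 1 / 2)) hc]

lemma chernoff_eq (m₁ m₂ : ℝ) {v : ℝ} (hv : 0 < v) :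
    chernoff m₁ m₂ v = (m₁ - m₂) ^ 2 / (8 * v) := by
  simp_rw [chernoff, integral_gpdf_rpow_mul_gpdf_rpow m₁ m₂ hv, log_exp,
    iInf_Icc_neg_mul_one_sub_mul (by positivity : 0 ≤ (m₁ - m₂) ^ 2 / (2 * v))]
  field_simp
  ring

lemma sq_add_sq_pos_of_ne_zero {a b : ℝ} (h : (a, b) ≠ ((0 : ℝ), (0 : ℝ))) :
    0 < a ^ 2 + b ^ 2 := by
  contrapose! h
  have ha : a ^ 2 = 0 := by linarith [sq_nonneg a, sq_nonneg b]
  have hb : b ^ 2 = 0 := by linarith [sq_nonneg a, sq_nonneg b]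
  simp_all

lemma two_mul_div_sub_sq_sub_mul_div {α₁ α₂ d v : ℝ} (hα : α₁ ^ 2 + α₂ ^ 2 ≠ 0) (hv : v ≠ 0) :
    2 * (d / (8 * v)) - (α₁ - α₂) ^ 2 * d / (8 * ((α₁ ^ 2 + α₂ ^ 2) * v))
      = (α₁ + α₂) ^ 2 * d / (8 * ((α₁ ^ 2 + α₂ ^ 2) * v)) := by
  field_simp
  ring

/-- A linear mixed observation of two Gaussian variables has Chernoff information at most
twice that of a separate observation, with equality iff α₂ = −α₁. -/
theorem stmt6 (σ A B α₁ α₂ : ℝ) (hσ : 0 < σ) (hAB : A ≠ B)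
    (hα : (α₁, α₂) ≠ ((0 : ℝ), (0 : ℝ))) :
    chernoff (α₁ * A + α₂ * B) (α₁ * B + α₂ * A) ((α₁ ^ 2 + α₂ ^ 2) * σ ^ 2)
        ≤ 2 * chernoff A B (σ ^ 2)
    ∧ (α₁ - α₂) ^ 2 * (A - B) ^ 2 / (8 * ((α₁ ^ 2 + α₂ ^ 2) * σ ^ 2))
        ≤ 2 * ((A - B) ^ 2 / (8 * σ ^ 2))
    ∧ (chernoff (α₁ * A + α₂ * B) (α₁ * B + α₂ * A) ((α₁ ^ 2 + α₂ ^ 2) * σ ^ 2)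
          = 2 * chernoff A B (σ ^ 2) ↔ α₂ = -α₁) := by
  have hs := sq_add_sq_pos_of_ne_zero hα
  have hσ2 : 0 < σ ^ 2 := pow_pos hσ 2
  have hgap := two_mul_div_sub_sq_sub_mul_div (d := (A - B) ^ 2) hs.ne' hσ2.ne'
  rw [chernoff_eq _ _ (mul_pos hs hσ2), chernoff_eq _ _ hσ2,
    show α₁ * A + α₂ * B - (α₁ * B + α₂ * A) = (α₁ - α₂) * (A - B) by ring, mul_pow]
  have hle : (α₁ - α₂) ^ 2 * (A - B) ^ 2 / (8 * ((α₁ ^ 2 + α₂ ^ 2) * σ ^ 2))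
      ≤ 2 * ((A - B) ^ 2 / (8 * σ ^ 2)) := sub_nonneg.1 (hgap ▸ by positivity)
  refine ⟨hle, hle, ?_⟩
  rw [eq_comm, ← sub_eq_zero, hgap]
  simp [sub_eq_zero, hAB, hs.ne', hσ.ne', add_eq_zero_iff_eq_neg']
end

section
/- Let Σ be a real symmetric positive definite n×n matrix and let d ∈ ℝⁿ be nonzero. Then for every nonzero A ∈ ℝⁿ and every α ∈ [0,1], α(1−α)(Aᵀd)² / (2 AᵀΣA) ≤ (1/8) dᵀΣ⁻¹d, and equality is attained at α = 1/2 and A = Σ⁻¹d. Hence the maximum Chernoff information achievable by a time-invariant linear mixing of jointly Gaussian variables with common covariance Σ and mean difference d equals (1/8) dᵀΣ⁻¹d, attained by the mixing vector A = Σ⁻¹d. -/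
/-!
Put `x = S⁻¹ d`. Then `Aᵀd = Aᵀ S x` and `xᵀ S x = dᵀ S⁻¹ d`, so Cauchy–Schwarz for the inner
product `⟪u, v⟫ = uᵀ S v` gives `(Aᵀd)² ≤ (Aᵀ S A)(dᵀ S⁻¹ d)`, with equality at `A = x`;
together with `α(1 - α) ≤ 1/4`, attained at `α = 1/2`, this is the claim.
-/

open Matrix

namespace Matrix

variable {ι : Type*} [Fintype ι]

theorem PosSemidef.dotProduct_mulVec_sq_le {S : Matrix ι ι ℝ} (hS : S.PosSemidef) (u v : ι → ℝ) :
    (u ⬝ᵥ S *ᵥ v) ^ 2 ≤ (u ⬝ᵥ S *ᵥ u) * (v ⬝ᵥ S *ᵥ v) := by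
  let _ := S.toSeminormedAddCommGroup hS
  let _ := S.toInnerProductSpace hS
  have h := real_inner_mul_inner_self_le u v
  -- the inner product of `toInnerProductSpace` is `⟪u, v⟫ = (S *ᵥ v) ⬝ᵥ u` by definition
  change ((S *ᵥ v) ⬝ᵥ u) * ((S *ᵥ v) ⬝ᵥ u) ≤ ((S *ᵥ u) ⬝ᵥ u) * ((S *ᵥ v) ⬝ᵥ v) at h
  simpa only [dotProduct_comm (S *ᵥ _), sq] using h

variable [DecidableEq ι]

theorem dotProduct_mulVec_nonsing_inv_mulVec {R : Type*} [CommRing R] {S : Matrix ι ι R}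
    (hS : IsUnit S.det) (u d : ι → R) :
    u ⬝ᵥ S *ᵥ (S⁻¹ *ᵥ d) = u ⬝ᵥ d := by
  rw [mulVec_mulVec, mul_nonsing_inv S hS, one_mulVec]

theorem PosDef.dotProduct_sq_le_mul_inv {S : Matrix ι ι ℝ} (hS : S.PosDef) (u d : ι → ℝ) :
    (u ⬝ᵥ d) ^ 2 ≤ (u ⬝ᵥ S *ᵥ u) * (d ⬝ᵥ S⁻¹ *ᵥ d) := by
  have hdet := (isUnit_iff_isUnit_det S).mp hS.isUnit
  have h := hS.posSemidef.dotProduct_mulVec_sq_le u (S⁻¹ *ᵥ d)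
  rwa [dotProduct_mulVec_nonsing_inv_mulVec hdet, dotProduct_mulVec_nonsing_inv_mulVec hdet,
    dotProduct_comm (S⁻¹ *ᵥ d)] at h

end Matrix

theorem stmt8_general {n : ℕ} (S : Matrix (Fin n) (Fin n) ℝ) (hS : S.PosDef)
    (d : Fin n → ℝ) :
    (∀ A : Fin n → ℝ, A ≠ 0 → ∀ α ∈ Set.Icc (0 : ℝ) 1,
        α * (1 - α) * (A ⬝ᵥ d) ^ 2 / (2 * (A ⬝ᵥ S *ᵥ A)) ≤ (1 / 8) * (d ⬝ᵥ S⁻¹ *ᵥ d))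
    ∧ ((1 / 2 : ℝ) * (1 - (1 / 2 : ℝ)) * ((S⁻¹ *ᵥ d) ⬝ᵥ d) ^ 2
          / (2 * ((S⁻¹ *ᵥ d) ⬝ᵥ S *ᵥ (S⁻¹ *ᵥ d)))
        = (1 / 8) * (d ⬝ᵥ S⁻¹ *ᵥ d)) := by
  refine ⟨fun A hA α hα => ?_, ?_⟩
  · have hq : 0 < A ⬝ᵥ S *ᵥ A := hS.dotProduct_mulVec_pos hA
    have hcs := hS.dotProduct_sq_le_mul_inv A d
    have hquarter : α * (1 - α) ≤ 1 / 4 := by nlinarith [sq_nonneg (α - 1 / 2)]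
    have hα : 0 ≤ α * (1 - α) := mul_nonneg hα.1 (sub_nonneg.mpr hα.2)
    rw [div_le_iff₀ (by positivity)]
    nlinarith [mul_le_mul hquarter hcs (sq_nonneg _) (by norm_num)]
  · rw [dotProduct_mulVec_nonsing_inv_mulVec ((isUnit_iff_isUnit_det S).mp hS.isUnit),
      dotProduct_comm (S⁻¹ *ᵥ d)]
    generalize d ⬝ᵥ S⁻¹ *ᵥ d = c
    rcases eq_or_ne c 0 with rfl | hc
    · simp
    · field_simp
      ring

/-- For jointly Gaussian variables with common covariance Σ and mean difference d, every
linear mixing A and α ∈ [0,1] give Chernoff exponent α(1−α)(Aᵀd)²/(2AᵀΣA) ≤ (1/8)dᵀΣ⁻¹d,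
with equality at α = 1/2 and A = Σ⁻¹d. -/
theorem stmt8 {n : ℕ} (S : Matrix (Fin n) (Fin n) ℝ) (hsymm : S.IsSymm) (hS : S.PosDef)
    (d : Fin n → ℝ) (hd : d ≠ 0) :
    (∀ A : Fin n → ℝ, A ≠ 0 → ∀ α ∈ Set.Icc (0 : ℝ) 1,
        α * (1 - α) * (A ⬝ᵥ d) ^ 2 / (2 * (A ⬝ᵥ S *ᵥ A)) ≤ (1 / 8) * (d ⬝ᵥ S⁻¹ *ᵥ d))
    ∧ ((1 / 2 : ℝ) * (1 - (1 / 2 : ℝ)) * ((S⁻¹ *ᵥ d) ⬝ᵥ d) ^ 2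
          / (2 * ((S⁻¹ *ᵥ d) ⬝ᵥ S *ᵥ (S⁻¹ *ᵥ d)))
        = (1 / 8) * (d ⬝ᵥ S⁻¹ *ᵥ d)) :=
  stmt8_general S hS d
end

section
/- Let χ be a finite nonempty set and let P₁, P₂ be strictly positive probability mass functions on χ. Then for every λ ∈ ℝ, the function F(λ) = log Σ_{x∈χ} P₁(x)^λ P₂(x)^{1−λ} is differentiable at λ with derivative F'(λ) = ( Σ_{x∈χ} P₁(x)^λ P₂(x)^{1−λ} log(P₁(x)/P₂(x)) ) / ( Σ_{x∈χ} P₁(x)^λ P₂(x)^{1−λ} ), which equals D(P_λ ‖ P₂) − D(P_λ ‖ P₁) where P_λ(x) = P₁(x)^λ P₂(x)^{1−λ} / Σ_{x'} P₁(x')^λ P₂(x')^{1−λ}. -/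
open Real Finset

/-- KL divergence between probability mass functions on a finite set. -/
noncomputable def KL {χ : Type*} [Fintype χ] (P Q : χ → ℝ) : ℝ :=
  ∑ x, P x * Real.log (P x / Q x)

/-- The λ-tilted (geometric) mixture of two probability mass functions. -/
noncomputable def tilt {χ : Type*} [Fintype χ] (P Q : χ → ℝ) (lam : ℝ) : χ → ℝ :=
  fun x => P x ^ lam * Q x ^ (1 - lam) / ∑ y, P y ^ lam * Q y ^ (1 - lam)

/-! Each summand `P₁(x)^t P₂(x)^{1-t} = P₂(x) · exp (t log (P₁(x)/P₂(x)))` has derivative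
`P₁(x)^t P₂(x)^{1-t} log (P₁(x)/P₂(x))`, so `F` is a log-partition function whose derivative is
the mean of `log (P₁/P₂)` under the tilted distribution `P_λ`. That mean is
`D(P_λ ‖ P₂) − D(P_λ ‖ P₁)`, because the `log P_λ` terms of the two divergences cancel. -/

lemma hasDerivAt_rpow_mul_rpow_one_sub {a b : ℝ} (ha : 0 < a) (hb : 0 < b) (t : ℝ) :
    HasDerivAt (fun s : ℝ => a ^ s * b ^ (1 - s)) (a ^ t * b ^ (1 - t) * log (a / b)) t := by
  have hA : HasDerivAt (fun s : ℝ => a ^ s) (a ^ t * log a) t :=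
    (hasStrictDerivAt_const_rpow ha t).hasDerivAt
  have hB : HasDerivAt (fun s : ℝ => b ^ (1 - s)) (b ^ (1 - t) * log b * (0 - 1)) t :=
    (hasStrictDerivAt_const_rpow hb (1 - t)).hasDerivAt.comp t
      ((hasDerivAt_const t 1).sub (hasDerivAt_id t))
  refine (hA.mul hB).congr_deriv ?_
  rw [log_div ha.ne' hb.ne']
  ring

lemma KL_sub_KL {χ : Type*} [Fintype χ] (R Q₁ Q₂ : χ → ℝ)
    (hQ₁ : ∀ x, Q₁ x ≠ 0) (hQ₂ : ∀ x, Q₂ x ≠ 0) :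
    KL R Q₂ - KL R Q₁ = ∑ x, R x * log (Q₁ x / Q₂ x) := by
  rw [KL, KL, ← sum_sub_distrib]
  refine sum_congr rfl fun x _ => ?_
  rcases eq_or_ne (R x) 0 with hR | hR
  · simp [hR]
  · rw [log_div hR (hQ₂ x), log_div hR (hQ₁ x), log_div (hQ₁ x) (hQ₂ x)]
    ring

theorem stmt13_general {χ : Type*} [Fintype χ] [Nonempty χ] (P₁ P₂ : χ → ℝ)
    (h₁pos : ∀ x, 0 < P₁ x) (h₂pos : ∀ x, 0 < P₂ x) (lam : ℝ) :
    HasDerivAt (fun t : ℝ => Real.log (∑ x, P₁ x ^ t * P₂ x ^ (1 - t)))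
      ((∑ x, P₁ x ^ lam * P₂ x ^ (1 - lam) * Real.log (P₁ x / P₂ x))
        / (∑ x, P₁ x ^ lam * P₂ x ^ (1 - lam))) lam
    ∧ (∑ x, P₁ x ^ lam * P₂ x ^ (1 - lam) * Real.log (P₁ x / P₂ x))
        / (∑ x, P₁ x ^ lam * P₂ x ^ (1 - lam))
      = KL (tilt P₁ P₂ lam) P₂ - KL (tilt P₁ P₂ lam) P₁ := by
  have hZ : 0 < ∑ x, P₁ x ^ lam * P₂ x ^ (1 - lam) :=
    sum_pos (fun x _ => mul_pos (rpow_pos_of_pos (h₁pos x) _) (rpow_pos_of_pos (h₂pos x) _))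
      univ_nonempty
  refine ⟨?_, ?_⟩
  · exact (HasDerivAt.fun_sum fun x _ =>
      hasDerivAt_rpow_mul_rpow_one_sub (h₁pos x) (h₂pos x) lam).log hZ.ne'
  · rw [KL_sub_KL _ _ _ (fun x => (h₁pos x).ne') (fun x => (h₂pos x).ne'), sum_div]
    exact sum_congr rfl fun x _ => by rw [tilt]; ring

/-- F(λ) = log Σ_x P₁(x)^λ P₂(x)^{1−λ} is differentiable with derivative
(Σ_x P₁^λ P₂^{1−λ} log(P₁/P₂)) / (Σ_x P₁^λ P₂^{1−λ}) = D(P_λ‖P₂) − D(P_λ‖P₁). -/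
theorem stmt13 {χ : Type*} [Fintype χ] [Nonempty χ] (P₁ P₂ : χ → ℝ)
    (h₁pos : ∀ x, 0 < P₁ x) (h₂pos : ∀ x, 0 < P₂ x)
    (h₁sum : ∑ x, P₁ x = 1) (h₂sum : ∑ x, P₂ x = 1) (lam : ℝ) :
    HasDerivAt (fun t : ℝ => Real.log (∑ x, P₁ x ^ t * P₂ x ^ (1 - t)))
      ((∑ x, P₁ x ^ lam * P₂ x ^ (1 - lam) * Real.log (P₁ x / P₂ x))
        / (∑ x, P₁ x ^ lam * P₂ x ^ (1 - lam))) lam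
    ∧ (∑ x, P₁ x ^ lam * P₂ x ^ (1 - lam) * Real.log (P₁ x / P₂ x))
        / (∑ x, P₁ x ^ lam * P₂ x ^ (1 - lam))
      = KL (tilt P₁ P₂ lam) P₂ - KL (tilt P₁ P₂ lam) P₁ :=
  stmt13_general P₁ P₂ h₁pos h₂pos lam
end

section
/- Let 𝒜 be a finite nonempty set, let p : 𝒜 → [0,1] with Σ_{a∈𝒜} p(a) = 1, let (Ω, μ) be a measure space, and for each a ∈ 𝒜 let f_a, g_a : Ω → [0,∞) be measurable with ∫ f_a dμ = 1 and ∫ g_a dμ = 1. Define Z_a(λ) = ∫ f_a(x)^λ g_a(x)^{1−λ} dμ(x). Then for every a₀ ∈ 𝒜, inf_{λ∈[0,1]} Σ_{a∈𝒜} p(a) Z_a(λ) ≤ 1 − p(a₀) + p(a₀) · inf_{λ∈[0,1]} Z_{a₀}(λ). Consequently, the inner conditional Chernoff information IC = −log( inf_{λ∈[0,1]} Σ_a p(a) Z_a(λ) ) satisfies IC ≥ −log( 1 − p(a₀) + p(a₀) e^{−C_{a₀}} ), where C_{a₀} = −log inf_{λ∈[0,1]} Z_{a₀}(λ) is the ordinary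 Chernoff information of the a₀-th measurement; in particular, if p(a₀) > 0 and C_{a₀} > 0, then IC > 0. -/
open MeasureTheory Real Set Finset

/-- The inner conditional Chernoff information is lower bounded using the ordinary
Chernoff information of any single measurement a₀; in particular it is positive as soon
as some measurement with positive probability has positive Chernoff information. -/
theorem stmt15 {𝒜 : Type*} [Fintype 𝒜] [Nonempty 𝒜] (p : 𝒜 → ℝ)
    (hp : ∀ a, p a ∈ Set.Icc (0 : ℝ) 1) (hpsum : ∑ a, p a = 1)
    {Ω : Type*} [MeasurableSpace Ω] (μ : Measure Ω) (f g : 𝒜 → Ω → ℝ)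
    (hf : ∀ a, Measurable (f a)) (hg : ∀ a, Measurable (g a))
    (hf0 : ∀ a x, 0 ≤ f a x) (hg0 : ∀ a x, 0 ≤ g a x)
    (hfi : ∀ a, ∫ x, f a x ∂μ = 1) (hgi : ∀ a, ∫ x, g a x ∂μ = 1)
    (a₀ : 𝒜) :
    (⨅ lam : Set.Icc (0 : ℝ) 1,
        ∑ a, p a * ∫ x, f a x ^ (lam : ℝ) * g a x ^ (1 - (lam : ℝ)) ∂μ)
      ≤ 1 - p a₀ + p a₀ *
          ⨅ lam : Set.Icc (0 : ℝ) 1, ∫ x, f a₀ x ^ (lam : ℝ) * g a₀ x ^ (1 - (lam : ℝ)) ∂μ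
    ∧ -Real.log (⨅ lam : Set.Icc (0 : ℝ) 1,
          ∑ a, p a * ∫ x, f a x ^ (lam : ℝ) * g a x ^ (1 - (lam : ℝ)) ∂μ)
        ≥ -Real.log (1 - p a₀ + p a₀ *
            Real.exp (-(-Real.log (⨅ lam : Set.Icc (0 : ℝ) 1,
              ∫ x, f a₀ x ^ (lam : ℝ) * g a₀ x ^ (1 - (lam : ℝ)) ∂μ))))
    ∧ (0 < p a₀ →
        0 < -Real.log (⨅ lam : Set.Icc (0 : ℝ) 1,
              ∫ x, f a₀ x ^ (lam : ℝ) * g a₀ x ^ (1 - (lam : ℝ)) ∂μ) →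
        0 < -Real.log (⨅ lam : Set.Icc (0 : ℝ) 1,
              ∑ a, p a * ∫ x, f a x ^ (lam : ℝ) * g a x ^ (1 - (lam : ℝ)) ∂μ)) := by
  classical
  haveI : Nonempty (Set.Icc (0 : ℝ) 1) := ⟨⟨0, by norm_num⟩⟩
  -- integrability of f and g
  have hintf : ∀ a, Integrable (f a) μ := by
    intro a
    by_contra h
    have := hfi a
    rw [integral_undef h] at this
    norm_num at this
  have hintg : ∀ a, Integrable (g a) μ := by
    intro a
    by_contra h
    have := hgi a
    rw [integral_undef h] at this
    norm_num at this
  set Z : 𝒜 → Set.Icc (0 : ℝ) 1 → ℝ :=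
    fun a lam => ∫ x, f a x ^ (lam : ℝ) * g a x ^ (1 - (lam : ℝ)) ∂μ with hZdef
  have hZ0 : ∀ a lam, 0 ≤ Z a lam := by
    intro a lam
    exact integral_nonneg fun x =>
      mul_nonneg (Real.rpow_nonneg (hf0 a x) _) (Real.rpow_nonneg (hg0 a x) _)
  have hZ1 : ∀ a lam, Z a lam ≤ 1 := by
    intro a lam
    obtain ⟨l, hl0, hl1⟩ := lam
    have hle : Z a ⟨l, hl0, hl1⟩ ≤ ∫ x, l * f a x + (1 - l) * g a x ∂μ := by
      refine integral_mono_of_nonneg (ae_of_all _ fun x =>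
        mul_nonneg (Real.rpow_nonneg (hf0 a x) _) (Real.rpow_nonneg (hg0 a x) _))
        (((hintf a).const_mul l).add ((hintg a).const_mul (1 - l)))
        (ae_of_all _ fun x => ?_)
      exact Real.geom_mean_le_arith_mean2_weighted hl0 (by linarith) (hf0 a x) (hg0 a x)
        (by ring)
    have : (∫ x, l * f a x + (1 - l) * g a x ∂μ) = 1 := by
      rw [integral_add ((hintf a).const_mul l) ((hintg a).const_mul (1 - l)),
        integral_const_mul, integral_const_mul, hfi, hgi]
      ring
    linarith
  have hZat0 : ∀ a, Z a ⟨0, by norm_num⟩ = 1 := by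
    intro a
    have : Z a ⟨0, by norm_num⟩ = ∫ x, g a x ∂μ := by
      simp [hZdef, Real.rpow_zero, Real.rpow_one]
    rw [this, hgi]
  -- boundedness of the relevant ranges
  have bddS : BddBelow (Set.range fun lam : Set.Icc (0 : ℝ) 1 => ∑ a, p a * Z a lam) := by
    refine ⟨0, ?_⟩
    rintro y ⟨lam, rfl⟩
    exact Finset.sum_nonneg fun a _ => mul_nonneg (hp a).1 (hZ0 a lam)
  have bddI : BddBelow (Set.range fun lam : Set.Icc (0 : ℝ) 1 => Z a₀ lam) :=
    ⟨0, by rintro y ⟨lam, rfl⟩; exact hZ0 a₀ lam⟩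
  set L : ℝ := ⨅ lam : Set.Icc (0 : ℝ) 1, ∑ a, p a * Z a lam with hLdef
  set I : ℝ := ⨅ lam : Set.Icc (0 : ℝ) 1, Z a₀ lam with hIdef
  have hI0 : 0 ≤ I := le_ciInf fun lam => hZ0 a₀ lam
  have hI1 : I ≤ 1 := by
    have := ciInf_le bddI (⟨0, by norm_num⟩ : Set.Icc (0 : ℝ) 1)
    rw [hZat0 a₀] at this
    exact this
  have hL0 : 0 ≤ L :=
    le_ciInf fun lam => Finset.sum_nonneg fun a _ => mul_nonneg (hp a).1 (hZ0 a lam)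
  -- sum bound
  have hsum : ∀ lam, (∑ a, p a * Z a lam) ≤ 1 - p a₀ + p a₀ * Z a₀ lam := by
    intro lam
    have h1 : p a₀ * Z a₀ lam + ∑ a ∈ Finset.univ.erase a₀, p a * Z a lam
        = ∑ a, p a * Z a lam :=
      Finset.add_sum_erase _ (fun a => p a * Z a lam) (Finset.mem_univ a₀)
    have h2 : ∑ a ∈ Finset.univ.erase a₀, p a * Z a lam
        ≤ ∑ a ∈ Finset.univ.erase a₀, p a :=
      Finset.sum_le_sum fun a _ => mul_le_of_le_one_right (hp a).1 (hZ1 a lam)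
    have h3 : ∑ a ∈ Finset.univ.erase a₀, p a = 1 - p a₀ := by
      rw [Finset.sum_erase_eq_sub (Finset.mem_univ a₀), hpsum]
    linarith
  have hL1 : L ≤ 1 := by
    have h := ciInf_le bddS (⟨0, by norm_num⟩ : Set.Icc (0 : ℝ) 1)
    have h2 : (∑ a, p a * Z a ⟨0, by norm_num⟩) = 1 := by
      calc (∑ a, p a * Z a ⟨0, by norm_num⟩) = ∑ a, p a :=
            Finset.sum_congr rfl fun a _ => by rw [hZat0 a, mul_one]
        _ = 1 := hpsum
    linarith
  -- lower bound for L
  have hLlb : p a₀ * I ≤ L := by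
    refine le_ciInf fun lam => ?_
    have h1 : p a₀ * I ≤ p a₀ * Z a₀ lam :=
      mul_le_mul_of_nonneg_left (ciInf_le bddI lam) (hp a₀).1
    have h2 : p a₀ * Z a₀ lam ≤ ∑ a, p a * Z a lam :=
      Finset.single_le_sum (fun a _ => mul_nonneg (hp a).1 (hZ0 a lam))
        (Finset.mem_univ a₀)
    linarith
  -- Part 1
  have part1 : L ≤ 1 - p a₀ + p a₀ * I := by
    rcases eq_or_lt_of_le (hp a₀).1 with hp0 | hp0
    · have : 1 - p a₀ + p a₀ * I = 1 := by rw [← hp0]; ring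
      rw [this]
      exact hL1
    · refine le_of_forall_pos_le_add fun ε hε => ?_
      obtain ⟨lam, hlam⟩ := exists_lt_of_ciInf_lt
        (show I < I + ε / p a₀ by have := div_pos hε hp0; linarith)
      calc L ≤ ∑ a, p a * Z a lam := ciInf_le bddS lam
        _ ≤ 1 - p a₀ + p a₀ * Z a₀ lam := hsum lam
        _ ≤ 1 - p a₀ + p a₀ * (I + ε / p a₀) := by
            have := mul_le_mul_of_nonneg_left hlam.le (hp a₀).1
            linarith
        _ = 1 - p a₀ + p a₀ * I + ε := by field_simp; ring
  refine ⟨part1, ?_, ?_⟩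
  · -- Part 2
    rw [neg_neg, ge_iff_le, neg_le_neg_iff]
    by_cases hI : I = 0
    · rw [hI, Real.log_zero, Real.exp_zero, mul_one]
      have : (1 : ℝ) - p a₀ + p a₀ = 1 := by ring
      rw [this, Real.log_one]
      exact Real.log_nonpos hL0 hL1
    · have hIpos : 0 < I := lt_of_le_of_ne hI0 (Ne.symm hI)
      rw [Real.exp_log hIpos]
      by_cases hp0 : p a₀ = 0
      · rw [hp0]
        have : (1 : ℝ) - 0 + 0 * I = 1 := by ring
        rw [this, Real.log_one]
        exact Real.log_nonpos hL0 hL1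
      · have hppos : 0 < p a₀ := lt_of_le_of_ne (hp a₀).1 (Ne.symm hp0)
        have hLpos : 0 < L := lt_of_lt_of_le (mul_pos hppos hIpos) hLlb
        exact Real.log_le_log hLpos part1
  · -- Part 3
    intro hppos hC
    have hlogI : Real.log I < 0 := by linarith [neg_pos.mp hC]
    have hIne : I ≠ 0 := by
      intro h
      rw [h, Real.log_zero] at hlogI
      exact lt_irrefl 0 hlogI
    have hIpos : 0 < I := lt_of_le_of_ne hI0 (Ne.symm hIne)
    have hIlt1 : I < 1 := (Real.log_neg_iff hIpos).mp hlogI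
    have hLpos : 0 < L := lt_of_lt_of_le (mul_pos hppos hIpos) hLlb
    have hLlt1 : L < 1 := by nlinarith
    have := Real.log_neg hLpos hLlt1
    linarith
end

section
/- Fix A ≥ 0. Then lim_{σ→∞} [ (1/7) log((σ² + 1)/(2σ)) ] / log(σ²) = 1/14, and lim_{σ→∞} [ (1/6) log( (1/2)√((σ²+A)/(1+A)) + (1/2)√((1+A)/(σ²+A)) ) ] / log(σ²) = 1/12. Consequently, there exists σ₀ > 0 such that for all σ > σ₀, (1/6) log( (1/2)√((σ²+A)/(1+A)) + (1/2)√((1+A)/(σ²+A)) ) > (1/7) log((σ² + 1)/(2σ)); that is, for large σ the Hamming-code mixed-measurement lower bound on the outer conditional Chernoff information strictly exceeds the outer conditional Chernoff information of separate observations. -/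
open Real Filter Topology

/-! Both exponents are `log σ + O(1)`: their arguments are asymptotic to `σ / 2` and
`σ / (2 √(1 + A))` respectively. Dividing by `log σ² = 2 log σ` gives the limits
`(1/7)(1/2)` and `(1/6)(1/2)`, and since `1/14 < 1/12` the ratios, hence the exponents
themselves, are eventually strictly ordered. -/

lemma tendsto_log_sub_log_of_div_self {f : ℝ → ℝ} {L : ℝ}
    (hf : Tendsto (fun σ => f σ / σ) atTop (𝓝 L)) (hL : L ≠ 0) :
    Tendsto (fun σ => log (f σ) - log σ) atTop (𝓝 (log L)) := by
  refine ((continuousAt_log hL).tendsto.comp hf).congr' ?_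
  filter_upwards [hf.eventually_ne hL, eventually_gt_atTop 0] with σ hfσ hσ
  exact log_div (div_ne_zero_iff.mp hfσ).1 hσ.ne'

lemma tendsto_div_log_sq_of_sub_log {g : ℝ → ℝ} {c : ℝ}
    (hg : Tendsto (fun σ => g σ - log σ) atTop (𝓝 c)) :
    Tendsto (fun σ => g σ / log (σ ^ 2)) atTop (𝓝 (1 / 2)) := by
  have hlog : Tendsto (fun σ : ℝ => 2 * log σ) atTop atTop :=
    tendsto_log_atTop.const_mul_atTop two_pos
  have h : Tendsto (fun σ => 1 / 2 + (g σ - log σ) / (2 * log σ)) atTop (𝓝 (1 / 2)) := by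
    simpa using tendsto_const_nhds.add (hg.div_atTop hlog)
  refine h.congr' ?_
  filter_upwards [eventually_gt_atTop 1] with σ hσ
  have hpos : 0 < log σ := log_pos hσ
  rw [log_pow]
  field_simp
  ring

lemma exists_forall_lt_of_tendsto_div_log_sq {f g : ℝ → ℝ} {a b : ℝ}
    (hf : Tendsto (fun σ => f σ / log (σ ^ 2)) atTop (𝓝 a))
    (hg : Tendsto (fun σ => g σ / log (σ ^ 2)) atTop (𝓝 b)) (hab : a < b) :
    ∃ σ₀ : ℝ, 0 < σ₀ ∧ ∀ σ : ℝ, σ₀ < σ → f σ < g σ := by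
  obtain ⟨s, hs⟩ := eventually_atTop.mp ((hf.eventually_lt hg hab).and (eventually_gt_atTop 1))
  refine ⟨max s 1, by positivity, fun σ hσ => ?_⟩
  obtain ⟨hlt, hσ1⟩ := hs σ (le_of_max_le_left hσ.le)
  exact (div_lt_div_iff_of_pos_right (log_pos (one_lt_pow₀ hσ1 two_ne_zero))).mp hlt

lemma tendsto_sq_add_one_div_two_mul_div_self :
    Tendsto (fun σ : ℝ => (σ ^ 2 + 1) / (2 * σ) / σ) atTop (𝓝 (1 / 2)) := by
  have h : Tendsto (fun σ : ℝ => 1 / 2 + 1 / 2 * σ⁻¹ ^ 2) atTop (𝓝 (1 / 2)) := by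
    simpa using tendsto_const_nhds.add ((tendsto_inv_atTop_zero.pow 2).const_mul (1 / 2 : ℝ))
  refine h.congr' ?_
  filter_upwards [eventually_ne_atTop 0] with σ hσ
  field_simp

lemma tendsto_hamming_bound_arg_div_self (A : ℝ) :
    Tendsto (fun σ : ℝ => ((1 / 2) * √((σ ^ 2 + A) / (1 + A))
      + (1 / 2) * √((1 + A) / (σ ^ 2 + A))) / σ) atTop (𝓝 (√((1 + A)⁻¹) / 2)) := by
  have hmain : Tendsto (fun σ : ℝ => √((1 + A * σ⁻¹ ^ 2) / (1 + A))) atTop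
      (𝓝 √((1 + A)⁻¹)) := by
    have h := ((tendsto_inv_atTop_zero.pow 2).const_mul A).const_add 1 |>.div_const (1 + A)
    simpa using h.sqrt
  have hsmall : Tendsto (fun σ : ℝ => √((1 + A) / (σ ^ 2 + A)) * σ⁻¹) atTop (𝓝 0) := by
    have h : Tendsto (fun σ : ℝ => (1 + A) / (σ ^ 2 + A)) atTop (𝓝 0) :=
      tendsto_const_nhds.div_atTop
        (tendsto_atTop_add_const_right _ A (tendsto_pow_atTop two_ne_zero))
    simpa using h.sqrt.mul tendsto_inv_atTop_zero
  have h := (hmain.const_mul (1 / 2 : ℝ)).add (hsmall.const_mul (1 / 2 : ℝ))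
  rw [mul_zero, add_zero, one_div_mul_eq_div, div_eq_mul_one_div] at h
  refine h.congr' ?_
  filter_upwards [eventually_gt_atTop 0] with σ hσ
  have hscale : (1 + A * σ⁻¹ ^ 2) / (1 + A) = ((σ ^ 2 + A) / (1 + A)) / σ ^ 2 := by
    field_simp
  rw [hscale, sqrt_div' _ (by positivity), sqrt_sq hσ.le]
  ring

/-- Asymptotics as σ → ∞: the separate-observation exponent (1/7) log((σ²+1)/(2σ)) scales
as (1/14) log(σ²), the Hamming-code lower bound scales as (1/12) log(σ²), and hence for
all large σ the Hamming-code bound strictly exceeds the separate-observation exponent. -/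
theorem stmt19 (A : ℝ) (hA : 0 ≤ A) :
    Tendsto (fun σ : ℝ =>
        ((1 / 7) * Real.log ((σ ^ 2 + 1) / (2 * σ))) / Real.log (σ ^ 2))
      atTop (nhds (1 / 14))
    ∧ Tendsto (fun σ : ℝ =>
        ((1 / 6) * Real.log ((1 / 2) * Real.sqrt ((σ ^ 2 + A) / (1 + A))
          + (1 / 2) * Real.sqrt ((1 + A) / (σ ^ 2 + A)))) / Real.log (σ ^ 2))
      atTop (nhds (1 / 12))
    ∧ ∃ σ₀ : ℝ, 0 < σ₀ ∧ ∀ σ : ℝ, σ₀ < σ →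
        (1 / 7) * Real.log ((σ ^ 2 + 1) / (2 * σ))
          < (1 / 6) * Real.log ((1 / 2) * Real.sqrt ((σ ^ 2 + A) / (1 + A))
              + (1 / 2) * Real.sqrt ((1 + A) / (σ ^ 2 + A))) := by
  have hsep := tendsto_div_log_sq_of_sub_log
    (tendsto_log_sub_log_of_div_self tendsto_sq_add_one_div_two_mul_div_self (by norm_num))
  have hham := tendsto_div_log_sq_of_sub_log
    (tendsto_log_sub_log_of_div_self (tendsto_hamming_bound_arg_div_self A) (by positivity))
  have t1 : Tendsto (fun σ : ℝ => ((1 / 7) * log ((σ ^ 2 + 1) / (2 * σ))) / log (σ ^ 2))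
      atTop (𝓝 (1 / 14)) := by
    simpa only [mul_div_assoc, show (1 / 14 : ℝ) = 1 / 7 * (1 / 2) by norm_num]
      using hsep.const_mul (1 / 7)
  have t2 : Tendsto (fun σ : ℝ => ((1 / 6) * log ((1 / 2) * √((σ ^ 2 + A) / (1 + A))
      + (1 / 2) * √((1 + A) / (σ ^ 2 + A)))) / log (σ ^ 2)) atTop (𝓝 (1 / 12)) := by
    simpa only [mul_div_assoc, show (1 / 12 : ℝ) = 1 / 6 * (1 / 2) by norm_num]
      using hham.const_mul (1 / 6)
  exact ⟨t1, t2, exists_forall_lt_of_tendsto_div_log_sq t1 t2 (by norm_num)⟩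
end
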